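/- arXiv:0710.3491 — 3 statements merged into one kernel-verified Lean document; each statement's English description precedes it below -/
import Mathlib

section
/- The function f₀(x) = (1 − cos x)/(π x²) is a probability density on ℝ, i.e., it is nonnegative and integrates to 1. -/
/-!
Write `1 / x ^ 2 = ∫₀^∞ t e^{-tx} dt` and swap the order of integration (Tonelli, everything is
nonnegative). For fixed `t` the Laplace transform of `1 - cos` gives
`∫₀^∞ e^{-tx} (1 - cos x) dx = 1 / (t (1 + t²))`, so
`∫₀^∞ (1 - cos x) / x² dx = ∫₀^∞ dt / (1 + t²) = π / 2`; by evenness the integral over `ℝ` is `π`.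
-/

open MeasureTheory Real Set Filter

section Laplace

variable {t : ℝ}

lemma integrableOn_exp_neg_mul (ht : 0 < t) :
    IntegrableOn (fun x => exp (-(t * x))) (Ioi 0) := by
  simpa only [neg_mul] using exp_neg_integrableOn_Ioi 0 ht

lemma integral_exp_neg_mul (ht : 0 < t) : ∫ x in Ioi 0, exp (-(t * x)) = 1 / t := by
  simpa [neg_div] using integral_exp_mul_Ioi (a := -t) (neg_neg_of_pos ht) 0

lemma exp_neg_mul_mul_cos_eq_re (t x : ℝ) :
    exp (-(t * x)) * cos x = (Complex.exp ((-t + Complex.I) * x)).re := by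
  simp [Complex.exp_re]

lemma integrableOn_exp_neg_mul_mul_cos (ht : 0 < t) :
    IntegrableOn (fun x => exp (-(t * x)) * cos x) (Ioi 0) := by
  simp_rw [exp_neg_mul_mul_cos_eq_re]
  exact (integrableOn_exp_mul_complex_Ioi (by simpa using ht) 0).re

lemma integral_exp_neg_mul_mul_cos (ht : 0 < t) :
    ∫ x in Ioi 0, exp (-(t * x)) * cos x = t / (1 + t ^ 2) := by
  simp_rw [exp_neg_mul_mul_cos_eq_re, ← RCLike.re_to_complex]
  rw [integral_re (integrableOn_exp_mul_complex_Ioi (by simpa using ht) 0),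
    integral_exp_mul_complex_Ioi (by simpa using ht)]
  simp only [Complex.ofReal_zero, mul_zero, Complex.exp_zero, RCLike.re_to_complex, Complex.div_re,
    Complex.neg_re, Complex.one_re, Complex.add_re, Complex.ofReal_re, Complex.I_re, add_zero,
    mul_neg, neg_mul, one_mul, neg_neg, Complex.normSq_apply, Complex.add_im, Complex.neg_im,
    Complex.ofReal_im, neg_zero, Complex.I_im, zero_add, mul_one, Complex.one_im, zero_div]
  field_simp
  ring

lemma integrableOn_exp_neg_mul_mul_one_sub_cos (ht : 0 < t) :
    IntegrableOn (fun x => exp (-(t * x)) * (1 - cos x)) (Ioi 0) := by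
  simp_rw [mul_one_sub]
  exact (integrableOn_exp_neg_mul ht).sub (integrableOn_exp_neg_mul_mul_cos ht)

lemma integral_exp_neg_mul_mul_one_sub_cos (ht : 0 < t) :
    ∫ x in Ioi 0, exp (-(t * x)) * (1 - cos x) = 1 / (t * (1 + t ^ 2)) := by
  simp_rw [mul_one_sub]
  rw [integral_sub (integrableOn_exp_neg_mul ht) (integrableOn_exp_neg_mul_mul_cos ht),
    integral_exp_neg_mul ht, integral_exp_neg_mul_mul_cos ht]
  field_simp
  ring

end Laplace

section Gamma

variable {x : ℝ}

lemma integrableOn_mul_exp_neg_mul (hx : 0 < x) :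
    IntegrableOn (fun t => t * exp (-(x * t))) (Ioi 0) := by
  simpa using integrableOn_rpow_mul_exp_neg_mul_rpow (s := 1) (p := 1) (by norm_num) one_pos hx

lemma integral_mul_exp_neg_mul (hx : 0 < x) :
    ∫ t in Ioi 0, t * exp (-(x * t)) = 1 / x ^ 2 := by
  simpa [Real.Gamma_two, show (2 : ℝ) - 1 = 1 by norm_num] using
    integral_rpow_mul_exp_neg_mul_Ioi (a := 2) two_pos hx

end Gamma

lemma lintegral_Ioi_one_sub_cos_div_sq :
    ∫⁻ x in Ioi 0, ENNReal.ofReal ((1 - cos x) / x ^ 2) = ENNReal.ofReal (π / 2) := by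
  set k : ℝ → ℝ → ℝ := fun t x => t * (exp (-(t * x)) * (1 - cos x))
  have inner_dx : ∀ t ∈ Ioi (0 : ℝ),
      ∫⁻ x in Ioi 0, ENNReal.ofReal (k t x) = ENNReal.ofReal (1 + t ^ 2)⁻¹ := by
    intro t (ht : 0 < t)
    rw [← ofReal_integral_eq_lintegral_ofReal
      ((integrableOn_exp_neg_mul_mul_one_sub_cos ht).const_mul t)
      (ae_of_all _ fun x =>
        mul_nonneg ht.le (mul_nonneg (exp_pos _).le (sub_nonneg.2 (cos_le_one x)))),
      integral_const_mul, integral_exp_neg_mul_mul_one_sub_cos ht]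
    congr 1
    field_simp
  have inner_dt : ∀ x ∈ Ioi (0 : ℝ),
      ∫⁻ t in Ioi 0, ENNReal.ofReal (k t x) = ENNReal.ofReal ((1 - cos x) / x ^ 2) := by
    intro x (hx : 0 < x)
    have hk : ∀ t, k t x = (1 - cos x) * (t * exp (-(x * t))) := fun t => by
      simp only [k]; ring_nf
    simp_rw [hk]
    rw [← ofReal_integral_eq_lintegral_ofReal ((integrableOn_mul_exp_neg_mul hx).const_mul _)
      (ae_restrict_of_forall_mem measurableSet_Ioi fun t (ht : 0 < t) =>
        mul_nonneg (sub_nonneg.2 (cos_le_one x)) (mul_nonneg ht.le (exp_pos _).le)),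
      integral_const_mul, integral_mul_exp_neg_mul hx, mul_one_div]
  have hk_meas : AEMeasurable (Function.uncurry fun t x => ENNReal.ofReal (k t x))
      ((volume.restrict (Ioi 0)).prod (volume.restrict (Ioi 0))) :=
    Measurable.aemeasurable (by fun_prop)
  calc ∫⁻ x in Ioi 0, ENNReal.ofReal ((1 - cos x) / x ^ 2)
      = ∫⁻ x in Ioi 0, ∫⁻ t in Ioi 0, ENNReal.ofReal (k t x) :=
        (setLIntegral_congr_fun measurableSet_Ioi inner_dt).symm
    _ = ∫⁻ t in Ioi 0, ∫⁻ x in Ioi 0, ENNReal.ofReal (k t x) :=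
        (lintegral_lintegral_swap hk_meas).symm
    _ = ∫⁻ t in Ioi 0, ENNReal.ofReal (1 + t ^ 2)⁻¹ :=
        setLIntegral_congr_fun measurableSet_Ioi inner_dx
    _ = ENNReal.ofReal (π / 2) := by
      rw [← ofReal_integral_eq_lintegral_ofReal integrable_inv_one_add_sq.integrableOn
        (ae_of_all _ fun t => by positivity), integral_Ioi_inv_one_add_sq, arctan_zero, sub_zero]

lemma integral_Ioi_one_sub_cos_div_sq : ∫ x in Ioi 0, (1 - cos x) / x ^ 2 = π / 2 := by
  rw [integral_eq_lintegral_of_nonneg_ae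
      (ae_of_all _ fun x => div_nonneg (sub_nonneg.2 (cos_le_one x)) (sq_nonneg x))
      (by fun_prop : Measurable fun x : ℝ => (1 - cos x) / x ^ 2).aestronglyMeasurable,
    lintegral_Ioi_one_sub_cos_div_sq, ENNReal.toReal_ofReal (by positivity)]

lemma integral_one_sub_cos_div_sq : ∫ x, (1 - cos x) / x ^ 2 = π := by
  have h := integral_comp_abs (f := fun x => (1 - cos x) / x ^ 2)
  simp only [cos_abs, sq_abs] at h
  rw [h, integral_Ioi_one_sub_cos_div_sq]
  ring

/-- `f₀(x) = (1 - cos x)/(π x²)` (extended continuously at 0 by `1/(2π)`)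
is a probability density: it is nonnegative and integrates to 1. -/
theorem stmt1 (f₀ : ℝ → ℝ)
    (hf₀ : ∀ x : ℝ, f₀ x = if x = 0 then 1 / (2 * π) else (1 - Real.cos x) / (π * x ^ 2)) :
    (∀ x, 0 ≤ f₀ x) ∧ ∫ x : ℝ, f₀ x = 1 := by
  refine ⟨fun x => ?_, ?_⟩
  · rw [hf₀ x]
    split_ifs
    · positivity
    · exact div_nonneg (sub_nonneg.2 (cos_le_one x)) (by positivity)
  · have hf₀_ae : f₀ =ᵐ[volume] fun x => (1 - cos x) / x ^ 2 / π := by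
      filter_upwards [Measure.ae_ne volume 0] with x hx
      rw [hf₀ x, if_neg hx, div_div, mul_comm]
    rw [integral_congr_ae hf₀_ae, integral_div, integral_one_sub_cos_div_sq, div_self pi_ne_zero]
end

section
/- Let ν > 0, ζ > 0, r > max(0, 1/ν − 1), and suppose |f_δ^ft(t)|² ≤ C₂(1+t²)^{−ν}. Then with h = n^{−ζ}, the variance-type term V_{2,n} = (2πn)^{−1} ∫_{{|f_δ^ft| ≥ h}} |f_δ^ft(t)|^{−2} dt satisfies V_{2,n} = O(n^{−1+ζ(2ν+1)/ν}), provided also |f_δ^ft(t)|² ≥ C₁(1+t²)^{−ν} with C₁ > 0. -/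
/-!
On `{t | h ≤ ‖f t‖}` the decay bound gives `h² ≤ C (1 + t²)^(-ν)`, so this set lies in `[-T, T]`
with `T = (C / h²)^(1/(2ν))`, and there the integrand `‖f t‖⁻²` is at most `h⁻²`. The integral is
therefore at most `2T / h²`, which for `h = n^(-ζ)` is `2 C^(1/(2ν)) n^(2ζ + ζ/ν)`.
-/

open MeasureTheory Real

section

variable {E : Type*} [SeminormedAddCommGroup E] {f : ℝ → E} {C ν h : ℝ}

lemma abs_le_of_le_norm_of_sq_norm_le (hν : 0 < ν) (hh : 0 < h)
    (hf : ∀ t, ‖f t‖ ^ 2 ≤ C * (1 + t ^ 2) ^ (-ν)) {t : ℝ} (ht : h ≤ ‖f t‖) :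
    |t| ≤ (C / h ^ 2) ^ (1 / (2 * ν)) := by
  have hbase : 0 < 1 + t ^ 2 := by positivity
  have hdecay : (1 + t ^ 2) ^ ν ≤ C / h ^ 2 := by
    have hsq : h ^ 2 ≤ C / (1 + t ^ 2) ^ ν := by
      calc h ^ 2 ≤ ‖f t‖ ^ 2 := pow_le_pow_left₀ hh.le ht 2
        _ ≤ C * (1 + t ^ 2) ^ (-ν) := hf t
        _ = C / (1 + t ^ 2) ^ ν := by rw [rpow_neg hbase.le, div_eq_mul_inv]
    rw [le_div_iff₀ (by positivity), mul_comm] at hsq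
    rwa [le_div_iff₀ (by positivity)]
  calc |t| ≤ √(1 + t ^ 2) := abs_le_sqrt (by linarith)
    _ = ((1 + t ^ 2) ^ ν) ^ (1 / (2 * ν)) := by
        rw [sqrt_eq_rpow, ← rpow_mul hbase.le]
        congr 1
        field_simp
    _ ≤ (C / h ^ 2) ^ (1 / (2 * ν)) := by gcongr

lemma setIntegral_le_of_subset_Icc {g : ℝ → ℝ} {S : Set ℝ} {M T : ℝ} (hM : 0 ≤ M) (hT : 0 ≤ T)
    (hS : S ⊆ Set.Icc (-T) T) (hg : ∀ t ∈ S, ‖g t‖ ≤ M) :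
    ∫ t in S, g t ≤ M * (2 * T) := by
  have hvol : volume S ≤ ENNReal.ofReal (2 * T) := by
    calc volume S ≤ volume (Set.Icc (-T) T) := measure_mono hS
      _ = ENNReal.ofReal (2 * T) := by rw [volume_Icc]; ring_nf
  calc ∫ t in S, g t ≤ ‖∫ t in S, g t‖ := le_norm_self _
    _ ≤ M * volume.real S :=
        norm_setIntegral_le_of_norm_le_const (hvol.trans_lt ENNReal.ofReal_lt_top) hg
    _ ≤ M * (2 * T) := by
        gcongr
        exact ENNReal.toReal_le_of_le_ofReal (by positivity) hvol

lemma setIntegral_inv_sq_norm_superlevel_le (hν : 0 < ν) (hh : 0 < h) (hC : 0 ≤ C)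
    (hf : ∀ t, ‖f t‖ ^ 2 ≤ C * (1 + t ^ 2) ^ (-ν)) :
    ∫ t in {t | h ≤ ‖f t‖}, ‖f t‖⁻¹ ^ 2 ≤ h⁻¹ ^ 2 * (2 * (C / h ^ 2) ^ (1 / (2 * ν))) := by
  refine setIntegral_le_of_subset_Icc (by positivity) (by positivity)
    (fun t ht => abs_le.mp (abs_le_of_le_norm_of_sq_norm_le hν hh hf ht)) fun t ht => ?_
  rw [norm_pow, norm_inv, norm_norm]
  gcongr
  exact ht

end

lemma inv_two_pi_mul_bound_rpow_neg_eq {n C ν ζ : ℝ} (hn : 0 < n) (hC : 0 ≤ C) (hν : ν ≠ 0) :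
    (2 * π * n)⁻¹ * ((n ^ (-ζ))⁻¹ ^ 2 * (2 * (C / (n ^ (-ζ)) ^ 2) ^ (1 / (2 * ν)))) =
      C ^ (1 / (2 * ν)) / π * n ^ (-1 + ζ * (2 * ν + 1) / ν) := by
  have hsq : ∀ x : ℝ, (n ^ x) ^ 2 = n ^ (2 * x) := fun x => by
    rw [← rpow_natCast, ← rpow_mul hn.le]; ring_nf
  have hscale : (C / (n ^ (-ζ)) ^ 2) ^ (1 / (2 * ν)) = C ^ (1 / (2 * ν)) * n ^ (ζ / ν) := by
    rw [hsq, div_eq_mul_inv, ← rpow_neg hn.le, mul_rpow hC (by positivity), ← rpow_mul hn.le]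
    congr 2
    field_simp
  have hexp : -1 + ζ * (2 * ν + 1) / ν = -1 + 2 * ζ + ζ / ν := by field_simp; ring
  rw [hscale, ← rpow_neg hn.le, neg_neg, hsq, hexp, rpow_add hn, rpow_add hn, rpow_neg_one]
  field_simp

theorem stmt12_general (fδ : ℝ → ℂ) (C₂ ν ζ : ℝ)
    (hν : 0 < ν)
    (hub : ∀ t : ℝ, ‖fδ t‖ ^ 2 ≤ C₂ * (1 + t ^ 2) ^ (-ν)) :
    ∃ K : ℝ, 0 < K ∧ ∃ N : ℕ, ∀ n : ℕ, N ≤ n →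
      (2 * π * n)⁻¹ *
          (∫ t in {t : ℝ | (n : ℝ) ^ (-ζ) ≤ ‖fδ t‖}, (‖fδ t‖)⁻¹ ^ 2)
        ≤ K * (n : ℝ) ^ (-1 + ζ * (2 * ν + 1) / ν) := by
  -- Enlarging `C₂` keeps the bound and makes the constant positive.
  set C := max C₂ 1
  have hC : 0 < C := lt_max_of_lt_right one_pos
  have hubC : ∀ t : ℝ, ‖fδ t‖ ^ 2 ≤ C * (1 + t ^ 2) ^ (-ν) := fun t =>
    (hub t).trans (by gcongr; exact le_max_left _ _)
  refine ⟨C ^ (1 / (2 * ν)) / π, by positivity, 1, fun n hn => ?_⟩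
  have hn : (0 : ℝ) < n := by exact_mod_cast hn
  rw [← inv_two_pi_mul_bound_rpow_neg_eq hn hC.le hν.ne']
  gcongr
  exact setIntegral_inv_sq_norm_superlevel_le hν (by positivity) hC.le hubC

/-- Ordinary-smooth variance bound: with `h = n^{−ζ}`, the term
`V_{2,n} = (2πn)⁻¹ ∫_{{|f_δ^ft| ≥ h}} |f_δ^ft(t)|⁻² dt` is
`O(n^{−1+ζ(2ν+1)/ν})`. -/
theorem stmt12 (fδ : ℝ → ℂ) (C₁ C₂ ν ζ r : ℝ) (hC₁ : 0 < C₁) (hC : C₁ < C₂)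
    (hν : 0 < ν) (hζ : 0 < ζ) (hr : max 0 (1 / ν - 1) < r)
    (hub : ∀ t : ℝ, ‖fδ t‖ ^ 2 ≤ C₂ * (1 + t ^ 2) ^ (-ν))
    (hlb : ∀ t : ℝ, C₁ * (1 + t ^ 2) ^ (-ν) ≤ ‖fδ t‖ ^ 2) :
    ∃ K : ℝ, 0 < K ∧ ∃ N : ℕ, ∀ n : ℕ, N ≤ n →
      (2 * π * n)⁻¹ *
          (∫ t in {t : ℝ | (n : ℝ) ^ (-ζ) ≤ ‖fδ t‖}, (‖fδ t‖)⁻¹ ^ 2)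
        ≤ K * (n : ℝ) ^ (-1 + ζ * (2 * ν + 1) / ν) :=
  stmt12_general fδ C₂ ν ζ hν hub
end

section
/- For μ ≥ 1, λ > 0, ν > 0 and the set G = {t > 0 : |sin(λt)|^μ |t|^{−ν} < ε}, every t ∈ G with t ∈ [(j−1/2)π/λ, (j+1/2)π/λ] for integer j ≥ 1 satisfies |t − jπ/λ| ≤ (π/(2λ)) ε^{1/μ} ((j+1/2)π/λ)^{ν/μ}. -/
open Real

/-!
Write `λt = jπ + y`. On the `j`-th period `|y| ≤ π/2`, so Jordan's inequality
`(2/π)|y| ≤ |sin y| = |sin(λt)|` bounds the distance `|y|/λ` of `t` to the zero `jπ/λ` by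
`(π/(2λ))|sin(λt)|`. On the other hand, `t ≤ (j+1/2)π/λ` turns `|sin(λt)|^μ t^{-ν} < ε` into
`|sin(λt)| < ε^{1/μ} ((j+1/2)π/λ)^{ν/μ}`.
-/

theorem abs_sub_int_mul_pi_div_le {lam t : ℝ} (j : ℤ) (hlam : 0 < lam)
    (h : |lam * t - j * π| ≤ π / 2) :
    |t - j * π / lam| ≤ π / (2 * lam) * |sin (lam * t)| := by
  have hsin : |sin (lam * t - j * π)| = |sin (lam * t)| := by
    simp [sin_sub_int_mul_pi, abs_mul]
  have hjordan := mul_abs_le_abs_sin h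
  rw [hsin] at hjordan
  have hdist : |t - j * π / lam| = |lam * t - j * π| / lam := by
    rw [← abs_of_pos hlam, ← abs_div, abs_of_pos hlam]
    congr 1
    field_simp
  rw [hdist, div_le_iff₀ hlam]
  calc |lam * t - j * π| = π / 2 * (2 / π * |lam * t - j * π|) := by field_simp
    _ ≤ π / 2 * |sin (lam * t)| := by gcongr
    _ = π / (2 * lam) * |sin (lam * t)| * lam := by field_simp

theorem le_rpow_mul_rpow_of_rpow_mul_rpow_neg_lt {s t T μ ν ε : ℝ} (hs : 0 ≤ s) (ht : 0 < t)
    (htT : t ≤ T) (hμ : 0 < μ) (hν : 0 ≤ ν) (h : s ^ μ * t ^ (-ν) < ε) :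
    s ≤ ε ^ (1 / μ) * T ^ (ν / μ) := by
  have hε : 0 < ε := (by positivity : 0 ≤ s ^ μ * t ^ (-ν)).trans_lt h
  have hpow : s ^ μ ≤ ε * T ^ ν :=
    calc s ^ μ = s ^ μ * t ^ (-ν) * t ^ ν := by
          rw [mul_assoc, ← rpow_add ht, neg_add_cancel, rpow_zero, mul_one]
      _ ≤ ε * t ^ ν := by gcongr
      _ ≤ ε * T ^ ν := by gcongr
  calc s = (s ^ μ) ^ (1 / μ) := by rw [← rpow_mul hs, mul_one_div_cancel hμ.ne', rpow_one]
    _ ≤ (ε * T ^ ν) ^ (1 / μ) := by gcongr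
    _ = ε ^ (1 / μ) * T ^ (ν / μ) := by
      have hT : 0 ≤ T := ht.le.trans htT
      rw [mul_rpow hε.le (rpow_nonneg hT ν), ← rpow_mul hT, mul_one_div]

theorem stmt13_general (μ ν lam ε : ℝ) (hμ : 1 ≤ μ) (hν : 0 < ν) (hlam : 0 < lam) :
    ∀ (j : ℕ), 1 ≤ j → ∀ t : ℝ, 0 < t →
      |Real.sin (lam * t)| ^ μ * t ^ (-ν) < ε →
      ((j : ℝ) - 1 / 2) * π / lam ≤ t → t ≤ ((j : ℝ) + 1 / 2) * π / lam →
      |t - (j : ℝ) * π / lam|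
        ≤ (π / (2 * lam)) * ε ^ (1 / μ) * (((j : ℝ) + 1 / 2) * π / lam) ^ (ν / μ) := by
  intro j _ t ht hG hleft hright
  have hperiod : |lam * t - (j : ℤ) * π| ≤ π / 2 := by
    rw [div_le_iff₀ hlam] at hleft
    rw [le_div_iff₀ hlam] at hright
    push_cast
    exact abs_le.mpr ⟨by linarith, by linarith⟩
  have hsin := le_rpow_mul_rpow_of_rpow_mul_rpow_neg_lt (abs_nonneg _) ht hright
    (by linarith) hν.le hG
  calc |t - (j : ℝ) * π / lam| ≤ π / (2 * lam) * |sin (lam * t)| := by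
        exact_mod_cast abs_sub_int_mul_pi_div_le j hlam hperiod
    _ ≤ π / (2 * lam) * (ε ^ (1 / μ) * (((j : ℝ) + 1 / 2) * π / lam) ^ (ν / μ)) := by gcongr
    _ = _ := by ring

/-- Geometric localization: for `μ ≥ 1`, `λ > 0`, `ν > 0`, `ε > 0`, any `t > 0`
with `|sin(λt)|^μ t^{−ν} < ε` lying in the `j`-th period
`[(j−1/2)π/λ, (j+1/2)π/λ]` (`j ≥ 1`) satisfies
`|t − jπ/λ| ≤ (π/(2λ)) ε^{1/μ} ((j+1/2)π/λ)^{ν/μ}`. -/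
theorem stmt13 (μ ν lam ε : ℝ) (hμ : 1 ≤ μ) (hν : 0 < ν) (hlam : 0 < lam)
    (hε : 0 < ε) :
    ∀ (j : ℕ), 1 ≤ j → ∀ t : ℝ, 0 < t →
      |Real.sin (lam * t)| ^ μ * t ^ (-ν) < ε →
      ((j : ℝ) - 1 / 2) * π / lam ≤ t → t ≤ ((j : ℝ) + 1 / 2) * π / lam →
      |t - (j : ℝ) * π / lam|
        ≤ (π / (2 * lam)) * ε ^ (1 / μ) * (((j : ℝ) + 1 / 2) * π / lam) ^ (ν / μ) :=
  stmt13_general μ ν lam ε hμ hν hlam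
end
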